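/- (Mellin representation of the fermionic one-loop Ω-potential.) Let (ω_k)_{k∈ℕ} be a sequence of positive real numbers, c > 0 a real number with Σ_k ω_k^{−c} < ∞, and β > 0. Then the series Σ_k log(1 + e^{−β ω_k}) converges, the vertical-line integral below converges absolutely, and Σ_k log(1 + e^{−β ω_k}) = (1/(2π)) ∫_{−∞}^{∞} Γ(c + it) · (1 − 2^{−(c+it)}) · ζ(1 + c + it) · β^{−(c+it)} · (Σ_k ω_k^{−(c+it)}) dt. -/

import Mathlib

/-!
Expanding `log (1 + e^{-x}) = ∑ₙ (-1)ⁿ e^{-(n+1)x} / (n+1)` and integrating termwise gives its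
Mellin transform `Γ(s) (1 - 2^{-s}) ζ(s+1)` for `Re s > 0`. On the line `Re s = c` this
transform is integrable, since `Γ` decays like `|t|⁻²` while the eta factor stays bounded, so
Mellin inversion recovers `log (1 + e^{-β ω_k})` as the integral of `(β ω_k)^{-s}` against it.
Since `‖(β ω_k)^{-s}‖ = (β ω_k)^{-c}`, the sum over `k` passes under the integral, where
`∑_k (β ω_k)^{-s} = β^{-s} ∑_k ω_k^{-s}`.
-/

open MeasureTheory Complex Filter

namespace Complex

lemma norm_Gamma_le_Gamma_re {z : ℂ} (hz : 0 < z.re) : ‖Gamma z‖ ≤ Real.Gamma z.re := by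
  rw [Gamma_eq_integral hz, GammaIntegral, Real.Gamma_eq_integral hz]
  refine norm_integral_le_of_norm_le (Real.GammaIntegral_convergent hz) ?_
  rw [ae_restrict_iff' measurableSet_Ioi]
  filter_upwards with x hx
  rw [norm_mul, norm_cpow_eq_rpow_re_of_pos hx, norm_real, Real.norm_eq_abs, Real.abs_exp,
    sub_re, one_re]

/-- From `Γ (z + 2) = z (z + 1) Γ z`, since `‖z‖ ‖z + 1‖` dominates both `re z (re z + 1)`
and `(im z) ^ 2`. -/
lemma norm_Gamma_mul_one_add_im_sq_le {z : ℂ} (hz : 0 < z.re) :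
    ‖Gamma z‖ * (1 + z.im ^ 2) ≤ Real.Gamma (z.re + 2) * (1 + 1 / (z.re * (z.re + 1))) := by
  have hz0 : z ≠ 0 := fun h => by simp [h] at hz
  have hz1 : z + 1 ≠ 0 := fun h => by
    have := congrArg re h
    simp only [add_re, one_re, zero_re] at this
    linarith
  have hre2 : (z + 1 + 1).re = z.re + 2 := by
    simp only [add_re, one_re]
    ring
  have hrec : ‖z‖ * ‖z + 1‖ * ‖Gamma z‖ ≤ Real.Gamma (z.re + 2) := by
    have h := norm_Gamma_le_Gamma_re (z := z + 1 + 1) (by linarith)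
    rwa [Gamma_add_one _ hz1, Gamma_add_one _ hz0, norm_mul, norm_mul, ← mul_assoc,
      mul_comm ‖z + 1‖, hre2] at h
  have hre : z.re * (z.re + 1) ≤ ‖z‖ * ‖z + 1‖ :=
    mul_le_mul (re_le_norm z) (by simpa using re_le_norm (z + 1)) (by linarith) (norm_nonneg z)
  have him : z.im ^ 2 ≤ ‖z‖ * ‖z + 1‖ := by
    rw [sq, ← abs_mul_abs_self]
    exact mul_le_mul (abs_im_le_norm z) (by simpa using abs_im_le_norm (z + 1)) (abs_nonneg _)
      (norm_nonneg z)
  have hq : 0 < z.re * (z.re + 1) := by positivity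
  have hG : 0 ≤ ‖Gamma z‖ := norm_nonneg _
  have h1 : ‖Gamma z‖ ≤ Real.Gamma (z.re + 2) / (z.re * (z.re + 1)) := by
    rw [le_div_iff₀ hq]
    nlinarith
  have h2 : ‖Gamma z‖ * z.im ^ 2 ≤ Real.Gamma (z.re + 2) := by nlinarith
  calc ‖Gamma z‖ * (1 + z.im ^ 2) = ‖Gamma z‖ + ‖Gamma z‖ * z.im ^ 2 := by ring
    _ ≤ Real.Gamma (z.re + 2) / (z.re * (z.re + 1)) + Real.Gamma (z.re + 2) := add_le_add h1 h2
    _ = Real.Gamma (z.re + 2) * (1 + 1 / (z.re * (z.re + 1))) := by ring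

lemma continuous_Gamma_ofReal_add_mul_I {c : ℝ} (hc : 0 < c) :
    Continuous fun t : ℝ => Gamma (c + t * I) := by
  refine continuous_iff_continuousAt.2 fun t =>
    (differentiableAt_Gamma _ fun m h => ?_).continuousAt.comp (by fun_prop)
  have := congrArg re h
  simp only [add_re, ofReal_re, mul_re, I_re, I_im, ofReal_im, neg_re, natCast_re] at this
  linarith [m.cast_nonneg (α := ℝ)]

lemma integrable_Gamma_ofReal_add_mul_I {c : ℝ} (hc : 0 < c) :
    Integrable fun t : ℝ => Gamma (c + t * I) := by
  refine (integrable_inv_one_add_sq.const_mul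
    (Real.Gamma (c + 2) * (1 + 1 / (c * (c + 1))))).mono'
    (continuous_Gamma_ofReal_add_mul_I hc).aestronglyMeasurable (ae_of_all _ fun t => ?_)
  rw [← div_eq_mul_inv, le_div_iff₀ (by positivity)]
  simpa using norm_Gamma_mul_one_add_im_sq_le (z := c + t * I) (by simpa using hc)

lemma norm_ofReal_cpow_neg_ofReal_add_mul_I {x : ℝ} (hx : 0 < x) (c t : ℝ) :
    ‖(x : ℂ) ^ (-((c : ℂ) + t * I))‖ = x ^ (-c) := by
  simp [norm_cpow_eq_rpow_re_of_pos hx]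

lemma continuous_cpow_neg_ofReal_add_mul_I {a : ℂ} (ha : a ≠ 0) (c : ℝ) :
    Continuous fun t : ℝ => a ^ (-((c : ℂ) + t * I)) :=
  Continuous.const_cpow (by fun_prop) (Or.inl ha)

end Complex

lemma norm_riemannZeta_le {z : ℂ} (hz : 1 < z.re) :
    ‖riemannZeta z‖ ≤ ∑' n : ℕ, 1 / (n : ℝ) ^ z.re := by
  have hnorm (n : ℕ) : ‖1 / (n : ℂ) ^ z‖ = 1 / (n : ℝ) ^ z.re := by
    rw [norm_div, norm_one, norm_natCast_cpow_of_re_ne_zero n (by linarith)]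
  rw [zeta_eq_tsum_one_div_nat_cpow hz, ← tsum_congr hnorm]
  exact norm_tsum_le_tsum_norm (summable_one_div_nat_cpow.2 hz).norm

lemma continuous_riemannZeta_ofReal_add_mul_I_add_one {c : ℝ} (hc : 0 < c) :
    Continuous fun t : ℝ => riemannZeta (c + t * I + 1) :=
  continuous_iff_continuousAt.2 fun t => (differentiableAt_riemannZeta fun h => by
    have := congrArg re h
    simp only [add_re, ofReal_re, mul_re, I_re, I_im, ofReal_im, one_re] at this
    linarith).continuousAt.comp (by fun_prop)

/-- Splitting `ζ z = ∑ 1 / n ^ z` into even and odd `n`, the even part is `2 ^ (-z) ζ z`. -/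
lemma hasSum_neg_one_pow_div_succ_cpow {z : ℂ} (hz : 1 < z.re) :
    HasSum (fun n : ℕ => (-1 : ℂ) ^ n / ((n : ℂ) + 1) ^ z)
      ((1 - 2 ^ (1 - z)) * riemannZeta z) := by
  have hz0 : z ≠ 0 := fun h => by simp [h] at hz; linarith
  have hζ : HasSum (fun n : ℕ => 1 / (n : ℂ) ^ z) (riemannZeta z) := by
    rw [zeta_eq_tsum_one_div_nat_cpow hz]
    exact (summable_one_div_nat_cpow.2 hz).hasSum
  have heven : HasSum (fun k : ℕ => 1 / ((2 * k : ℕ) : ℂ) ^ z)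
      (2 ^ (-z) * riemannZeta z) := by
    refine (hζ.mul_left _).congr_fun fun k => ?_
    rw [Nat.cast_mul, natCast_mul_natCast_cpow, cpow_neg, Nat.cast_ofNat, one_div, one_div,
      mul_inv]
  have hodd : HasSum (fun k : ℕ => 1 / ((2 * k + 1 : ℕ) : ℂ) ^ z)
      ((1 - 2 ^ (-z)) * riemannZeta z) := by
    have h := ((summable_one_div_nat_cpow.2 hz).comp_injective
      (fun a b (h : 2 * a + 1 = 2 * b + 1) => by omega)).hasSum
    have hval := hζ.unique (heven.even_add_odd h)
    rwa [eq_sub_of_add_eq' hval.symm, ← one_sub_mul] at h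
  set g : ℕ → ℂ := fun n => (-1) ^ (n + 1) / (n : ℂ) ^ z with hg_def
  have hg : HasSum g ((1 - 2 ^ (1 - z)) * riemannZeta z) := by
    have he : HasSum (fun k => g (2 * k)) (-(2 ^ (-z) * riemannZeta z)) :=
      heven.neg.congr_fun fun k => by simp [hg_def, pow_succ, pow_mul, neg_div]
    have ho : HasSum (fun k => g (2 * k + 1)) ((1 - 2 ^ (-z)) * riemannZeta z) :=
      hodd.congr_fun fun k => by simp [hg_def, pow_succ, pow_mul]
    have h2 : (2 : ℂ) ^ (1 - z) = 2 * 2 ^ (-z) := by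
      rw [sub_eq_add_neg, cpow_add _ _ two_ne_zero, cpow_one]
    convert he.even_add_odd ho using 1
    rw [h2]
    ring
  have hshift := (hasSum_nat_add_iff' 1).2 hg
  simp only [Finset.range_one, Finset.sum_singleton, hg_def, zero_add, Nat.cast_zero,
    zero_cpow hz0, div_zero, sub_zero] at hshift
  refine hshift.congr_fun fun n => ?_
  simp [pow_succ]

lemma Real.hasSum_log_one_add_exp_neg {x : ℝ} (hx : 0 < x) :
    HasSum (fun n : ℕ => (-1) ^ n / (n + 1) * Real.exp (-(n + 1) * x))
      (Real.log (1 + Real.exp (-x))) := by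
  have hlt : |-Real.exp (-x)| < 1 := by
    rw [abs_neg, Real.abs_exp, Real.exp_lt_one_iff]
    linarith
  have h := (Real.hasSum_pow_div_log_of_abs_lt_one hlt).neg
  rw [sub_neg_eq_add, neg_neg] at h
  refine h.congr_fun fun n => ?_
  rw [show Real.exp (-(n + 1) * x) = Real.exp (-x) ^ (n + 1) by
    rw [← Real.exp_nat_mul]; push_cast; ring_nf]
  ring

lemma Real.norm_log_one_add_exp_neg_le (x : ℝ) :
    ‖Real.log (1 + Real.exp (-x))‖ ≤ Real.exp (-x) := by
  have hpos := Real.exp_pos (-x)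
  rw [Real.norm_of_nonneg (Real.log_nonneg (by linarith))]
  linarith [Real.log_le_sub_one_of_pos (by linarith : 0 < 1 + Real.exp (-x))]

lemma continuous_log_one_add_exp_neg :
    Continuous fun x : ℝ => (Real.log (1 + Real.exp (-x)) : ℂ) :=
  continuous_ofReal.comp <| Continuous.log (by fun_prop) fun x => by positivity

lemma mellinConvergent_log_one_add_exp_neg {s : ℂ} (hs : 0 < s.re) :
    MellinConvergent (fun x : ℝ => (Real.log (1 + Real.exp (-x)) : ℂ)) s := by
  have hle (x : ℝ) : ‖(Real.log (1 + Real.exp (-x)) : ℂ)‖ ≤ Real.exp (-x) := by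
    simpa using Real.norm_log_one_add_exp_neg_le x
  refine mellinConvergent_of_isBigO_rpow_exp one_pos
    (continuous_log_one_add_exp_neg.locallyIntegrable.locallyIntegrableOn _) ?_ ?_ (b := 0) hs
  · refine Asymptotics.IsBigO.of_bound 1 (Eventually.of_forall fun x => ?_)
    simpa [Real.norm_of_nonneg (Real.exp_pos _).le] using hle x
  · refine Asymptotics.IsBigO.of_bound 1 (eventually_nhdsWithin_of_forall fun x hx => ?_)
    have hx' : 0 ≤ x := le_of_lt hx
    simpa using (hle x).trans (Real.exp_le_one_iff.2 (by linarith))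

lemma mellin_log_one_add_exp_neg {s : ℂ} (hs : 0 < s.re) :
    mellin (fun x : ℝ => (Real.log (1 + Real.exp (-x)) : ℂ)) s
      = Gamma s * (1 - 2 ^ (-s)) * riemannZeta (s + 1) := by
  have hsum := hasSum_mellin (a := fun n : ℕ => (-1 : ℂ) ^ n / (n + 1))
    (p := fun n => (n : ℝ) + 1) (fun n => Or.inr (by positivity)) hs
    (fun x hx => by
      simpa using (Complex.hasSum_ofReal.2 (Real.hasSum_log_one_add_exp_neg hx)))
    (((Real.summable_one_div_nat_add_rpow 1 (1 + s.re)).2 (by linarith)).congr fun n => by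
      have hn : (0 : ℝ) < n + 1 := by positivity
      rw [abs_of_pos hn, Real.rpow_add hn, Real.rpow_one, norm_div, norm_pow, norm_neg,
        norm_one, one_pow, div_div,
        show ‖(n : ℂ) + 1‖ = n + 1 by exact_mod_cast norm_natCast (n + 1)])
  have heta := (hasSum_neg_one_pow_div_succ_cpow (z := s + 1)
    (by rw [add_re, one_re]; linarith)).mul_left (Gamma s)
  rw [show (1 : ℂ) - (s + 1) = -s by ring] at heta
  refine (hsum.unique (heta.congr_fun fun n => ?_)).trans (by ring)
  have hn : (n : ℂ) + 1 ≠ 0 := Nat.cast_add_one_ne_zero n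
  push_cast
  rw [cpow_add _ _ hn, cpow_one]
  field_simp

lemma verticalIntegrable_mellin_log_one_add_exp_neg {c : ℝ} (hc : 0 < c) :
    VerticalIntegrable (mellin fun x : ℝ => (Real.log (1 + Real.exp (-x)) : ℂ)) c := by
  have hbound (t : ℝ) : ‖(1 - 2 ^ (-((c : ℂ) + t * I))) * riemannZeta (c + t * I + 1)‖
      ≤ (1 + 2 ^ (-c)) * ∑' n : ℕ, 1 / (n : ℝ) ^ (c + 1) := by
    rw [norm_mul]
    refine mul_le_mul ((norm_sub_le _ _).trans ?_) ?_ (norm_nonneg _) (by positivity)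
    · rw [norm_one, ← ofReal_ofNat, norm_ofReal_cpow_neg_ofReal_add_mul_I two_pos]
    · simpa using norm_riemannZeta_le (z := c + t * I + 1) (by simpa using hc)
  have hcont : Continuous fun t : ℝ =>
      (1 - 2 ^ (-((c : ℂ) + t * I))) * riemannZeta (c + t * I + 1) :=
    (continuous_const.sub (continuous_cpow_neg_ofReal_add_mul_I two_ne_zero c)).mul
      (continuous_riemannZeta_ofReal_add_mul_I_add_one hc)
  have hmellin (t : ℝ) := mellin_log_one_add_exp_neg (s := c + t * I) (by simpa using hc)
  unfold VerticalIntegrable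
  simp_rw [hmellin, mul_assoc]
  exact (integrable_Gamma_ofReal_add_mul_I hc).mul_bdd hcont.aestronglyMeasurable
    (ae_of_all _ hbound)

section DirichletSeries

variable {ι : Type*} {p : ι → ℝ} {c : ℝ}

lemma summable_norm_cpow_neg_ofReal_add_mul_I (hp : ∀ k, 0 < p k)
    (hsum : Summable fun k => p k ^ (-c)) (t : ℝ) :
    Summable fun k => ‖(p k : ℂ) ^ (-((c : ℂ) + t * I))‖ :=
  hsum.congr fun k => (norm_ofReal_cpow_neg_ofReal_add_mul_I (hp k) c t).symm

lemma norm_tsum_cpow_neg_ofReal_add_mul_I_le (hp : ∀ k, 0 < p k)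
    (hsum : Summable fun k => p k ^ (-c)) (t : ℝ) :
    ‖∑' k, (p k : ℂ) ^ (-((c : ℂ) + t * I))‖ ≤ ∑' k, p k ^ (-c) :=
  (norm_tsum_le_tsum_norm (summable_norm_cpow_neg_ofReal_add_mul_I hp hsum t)).trans_eq
    (tsum_congr fun k => norm_ofReal_cpow_neg_ofReal_add_mul_I (hp k) c t)

lemma continuous_tsum_cpow_neg_ofReal_add_mul_I (hp : ∀ k, 0 < p k)
    (hsum : Summable fun k => p k ^ (-c)) :
    Continuous fun t : ℝ => ∑' k, (p k : ℂ) ^ (-((c : ℂ) + t * I)) :=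
  continuous_tsum (fun k => continuous_cpow_neg_ofReal_add_mul_I (ofReal_ne_zero.2 (hp k).ne') c)
    hsum fun k t => (norm_ofReal_cpow_neg_ofReal_add_mul_I (hp k) c t).le

lemma integrable_mellin_mul_tsum_cpow_neg {F : ℝ → ℂ} (hF : VerticalIntegrable (mellin F) c)
    (hp : ∀ k, 0 < p k) (hsum : Summable fun k => p k ^ (-c)) :
    Integrable fun t : ℝ =>
      mellin F (c + t * I) * ∑' k, (p k : ℂ) ^ (-((c : ℂ) + t * I)) :=
  hF.mul_bdd (continuous_tsum_cpow_neg_ofReal_add_mul_I hp hsum).aestronglyMeasurable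
    (ae_of_all _ (norm_tsum_cpow_neg_ofReal_add_mul_I_le hp hsum))

/-- Mellin inversion at each `p k`, summed over `k` under the integral sign. -/
theorem hasSum_comp_eq_integral_mellin_mul_tsum_cpow_neg [Countable ι] {F : ℝ → ℂ}
    (hFc : ∀ k, ContinuousAt F (p k)) (hF : MellinConvergent F c)
    (hFv : VerticalIntegrable (mellin F) c) (hp : ∀ k, 0 < p k)
    (hsum : Summable fun k => p k ^ (-c)) :
    HasSum (fun k => F (p k)) (1 / (2 * (Real.pi : ℂ)) *
      ∫ t : ℝ, mellin F (c + t * I) * ∑' k, (p k : ℂ) ^ (-((c : ℂ) + t * I))) := by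
  set H : ι → ℝ → ℂ := fun k t =>
    mellin F (c + t * I) * (p k : ℂ) ^ (-((c : ℂ) + t * I))
  have hHnorm (k : ι) (t : ℝ) : ‖H k t‖ = ‖mellin F (c + t * I)‖ * p k ^ (-c) := by
    rw [norm_mul, norm_ofReal_cpow_neg_ofReal_add_mul_I (hp k)]
  have hHint (k : ι) : Integrable (H k) :=
    hFv.mul_bdd
      (continuous_cpow_neg_ofReal_add_mul_I (ofReal_ne_zero.2 (hp k).ne') c).aestronglyMeasurable
      (ae_of_all _ fun t => (norm_ofReal_cpow_neg_ofReal_add_mul_I (hp k) c t).le)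
  have hHsum : Summable fun k => ∫ t, ‖H k t‖ := by
    simp_rw [hHnorm, integral_mul_const]
    exact hsum.mul_left _
  have hinv (k : ι) : F (p k) = 1 / (2 * (Real.pi : ℂ)) * ∫ t, H k t := by
    rw [← mellinInv_mellin_eq c F (hp k) hF hFv (hFc k), mellinInv]
    simp [H, div_eq_inv_mul, mul_comm]
  simp_rw [← tsum_mul_left]
  exact ((hasSum_integral_of_summable_integral_norm hHint hHsum).mul_left _).congr_fun hinv

lemma tsum_ofReal_mul_cpow (hp : ∀ k, 0 < p k) {β : ℝ} (hβ : 0 < β) (s : ℂ) :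
    ∑' k, ((β * p k : ℝ) : ℂ) ^ s = (β : ℂ) ^ s * ∑' k, (p k : ℂ) ^ s := by
  rw [← tsum_mul_left]
  exact tsum_congr fun k => by rw [ofReal_mul, mul_cpow_ofReal_nonneg hβ.le (hp k).le]

end DirichletSeries

/-- Mellin representation of the fermionic one-loop Ω-potential. If
`(ω_k)` are positive with `∑_k ω_k^{−c} < ∞` for some `c > 0` and `β > 0`, then
`∑_k log(1 + e^{−β ω_k})
  = (1/2π) ∫_ℝ Γ(c+it) (1 − 2^{−(c+it)}) ζ(1+c+it) β^{−(c+it)} (∑_k ω_k^{−(c+it)}) dt`,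
with the series convergent and the vertical-line integral absolutely convergent. -/
theorem stmt16 (ω : ℕ → ℝ) (hω : ∀ k, 0 < ω k) (c : ℝ) (hc : 0 < c)
    (hsum : Summable fun k => ω k ^ (-c)) (β : ℝ) (hβ : 0 < β) :
    Summable (fun k => Real.log (1 + Real.exp (-(β * ω k)))) ∧
    Integrable (fun t : ℝ =>
      Complex.Gamma ((c : ℂ) + (t : ℂ) * Complex.I) *
        (1 - (2 : ℂ) ^ (-((c : ℂ) + (t : ℂ) * Complex.I))) *
        riemannZeta (1 + (c : ℂ) + (t : ℂ) * Complex.I) *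
        (β : ℂ) ^ (-((c : ℂ) + (t : ℂ) * Complex.I)) *
        ∑' k, (ω k : ℂ) ^ (-((c : ℂ) + (t : ℂ) * Complex.I))) ∧
    (∑' k, (Real.log (1 + Real.exp (-(β * ω k))) : ℂ))
      = (1 / (2 * (Real.pi : ℂ))) *
          ∫ t : ℝ, Complex.Gamma ((c : ℂ) + (t : ℂ) * Complex.I) *
            (1 - (2 : ℂ) ^ (-((c : ℂ) + (t : ℂ) * Complex.I))) *
            riemannZeta (1 + (c : ℂ) + (t : ℂ) * Complex.I) *
            (β : ℂ) ^ (-((c : ℂ) + (t : ℂ) * Complex.I)) *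
            ∑' k, (ω k : ℂ) ^ (-((c : ℂ) + (t : ℂ) * Complex.I)) := by
  have hp (k : ℕ) : 0 < β * ω k := mul_pos hβ (hω k)
  have hpsum : Summable fun k => (β * ω k) ^ (-c) := by
    simp_rw [Real.mul_rpow hβ.le (hω _).le]
    exact hsum.mul_left _
  have hintegrand : (fun t : ℝ => mellin (fun x : ℝ => (Real.log (1 + Real.exp (-x)) : ℂ))
        (c + t * I) * ∑' k, ((β * ω k : ℝ) : ℂ) ^ (-((c : ℂ) + t * I)))
      = fun t : ℝ => Gamma (c + t * I) * (1 - 2 ^ (-((c : ℂ) + t * I))) *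
        riemannZeta (1 + c + t * I) * (β : ℂ) ^ (-((c : ℂ) + t * I)) *
        ∑' k, (ω k : ℂ) ^ (-((c : ℂ) + t * I)) := by
    funext t
    rw [mellin_log_one_add_exp_neg (by simpa using hc), tsum_ofReal_mul_cpow hω hβ,
      show (c : ℂ) + t * I + 1 = 1 + c + t * I by ring]
    ring
  have hvert := verticalIntegrable_mellin_log_one_add_exp_neg hc
  have hint := integrable_mellin_mul_tsum_cpow_neg hvert hp hpsum
  have hlog := hasSum_comp_eq_integral_mellin_mul_tsum_cpow_neg
    (fun k => continuous_log_one_add_exp_neg.continuousAt)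
    (mellinConvergent_log_one_add_exp_neg (by simpa using hc)) hvert hp hpsum
  rw [hintegrand] at hint hlog
  exact ⟨Complex.summable_ofReal.1 hlog.summable, hint, hlog.tsum_eq⟩
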